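/- For n odd, \sum_{\sigma \in D_n} (-1/q)^{wex(\sigma)} q^{cr(\sigma)} = 0, where D_n is the set of derangements of {1,...,n}. -/

import Mathlib

/-!
Inversion `σ ↦ σ⁻¹` is an involution on derangements. For a derangement every index is either a
strict exceedance or a strict deficiency, so `wex σ + wex σ⁻¹ = n`: for `n` odd inversion has no
fixed points and flips the sign `(-1)^wex`. The exponent `cr σ + (n - wex σ) = cr σ + wex σ⁻¹` is
preserved: a crossing is either strict (`j < σ i` in the first case) or of the form `(i, σ i)`
with `i < σ i < σ² i`, and splitting the exceedances `i < σ i` according to `σ² i` gives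
`cr σ + #peaks σ = #strictCrossings σ + wex σ`, where both peaks (`σ⁻¹ i < i > σ i`) and strict
crossings are invariant under inversion (the latter via `(i, j) ↦ (σ i, σ j)`).
-/

open Finset Polynomial
open scoped Classical

noncomputable section
/-- Extension of a permutation of `Fin n` to a function on `ℕ` acting on `{1,…,n}`,
with the conventions `permVal σ 0 = 0` and `permVal σ j = j` for `j > n`. -/
def permVal {n : ℕ} (σ : Equiv.Perm (Fin n)) (j : ℕ) : ℕ :=
  if h : 1 ≤ j ∧ j ≤ n then (σ ⟨j - 1, by omega⟩ : ℕ) + 1 else j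

/-- Number of weak exceedances of a permutation of `{1,…,n}`. -/
def wex {n : ℕ} (σ : Equiv.Perm (Fin n)) : ℕ :=
  ((Finset.Icc 1 n).filter fun i => i ≤ permVal σ i).card

/-- Number of crossings of a permutation of `{1,…,n}`: pairs `(i,j)` with
`i < j ≤ σ(i) < σ(j)` or `σ(i) < σ(j) < i < j`. -/
def cr {n : ℕ} (σ : Equiv.Perm (Fin n)) : ℕ :=
  (((Finset.Icc 1 n) ×ˢ (Finset.Icc 1 n)).filter fun p =>
    (p.1 < p.2 ∧ p.2 ≤ permVal σ p.1 ∧ permVal σ p.1 < permVal σ p.2) ∨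
    (permVal σ p.1 < permVal σ p.2 ∧ permVal σ p.2 < p.1 ∧ p.1 < p.2)).card

namespace Equiv.Perm

lemma inv_mem_derangements {α : Type*} {σ : Perm α} (hσ : σ ∈ derangements α) :
    σ⁻¹ ∈ derangements α :=
  fun i h => hσ i (by simpa using congrArg σ h.symm)

variable {α : Type*} [Fintype α] [LinearOrder α] (σ : Perm α)

def weakExceedances : Finset α := univ.filter fun i => i ≤ σ i

def crossings : Finset (α × α) := univ.filter fun p =>
  (p.1 < p.2 ∧ p.2 ≤ σ p.1 ∧ σ p.1 < σ p.2) ∨ (σ p.1 < σ p.2 ∧ σ p.2 < p.1 ∧ p.1 < p.2)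

def strictCrossings : Finset (α × α) := univ.filter fun p =>
  (p.1 < p.2 ∧ p.2 < σ p.1 ∧ σ p.1 < σ p.2) ∨ (σ p.1 < σ p.2 ∧ σ p.2 < p.1 ∧ p.1 < p.2)

def peaks : Finset α := univ.filter fun i => σ⁻¹ i < i ∧ σ i < i

lemma peaks_inv : σ⁻¹.peaks = σ.peaks := by
  simp only [peaks, inv_inv, and_comm]

lemma card_strictCrossings_inv : #σ⁻¹.strictCrossings = #σ.strictCrossings :=
  card_equiv (σ⁻¹.prodCongr σ⁻¹) fun p => by
    simp only [strictCrossings, mem_filter, mem_univ, true_and, prodCongr_apply, Prod.map_fst,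
      Prod.map_snd, coe_inv, apply_symm_apply]
    tauto

variable {σ}

lemma card_weakExceedances_add_card_weakExceedances_inv (hσ : σ ∈ derangements α) :
    #σ.weakExceedances + #σ⁻¹.weakExceedances = Fintype.card α := by
  have hinv : #σ⁻¹.weakExceedances = #(univ.filter fun i => ¬ i ≤ σ i) := by
    refine card_equiv σ⁻¹ fun i => ?_
    have := hσ (σ⁻¹ i)
    simp only [weakExceedances, mem_filter, mem_univ, true_and, coe_inv, apply_symm_apply,
      not_le] at this ⊢
    exact ⟨fun h => lt_of_le_of_ne h this, le_of_lt⟩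
  rw [hinv, weakExceedances, card_filter_add_card_filter_not, card_univ]

lemma card_crossings :
    #σ.crossings = #σ.strictCrossings + #(univ.filter fun i => i < σ i ∧ σ i < σ (σ i)) := by
  have hsplit : σ.crossings = σ.strictCrossings ∪
      (univ.filter fun i => i < σ i ∧ σ i < σ (σ i)).image fun i => (i, σ i) := by
    ext ⟨i, j⟩
    simp only [crossings, strictCrossings, mem_union, mem_filter, mem_univ, true_and, mem_image,
      Prod.mk.injEq]
    grind
  rw [hsplit, card_union_of_disjoint, card_image_of_injective _ fun _ _ h => congrArg Prod.fst h]
  refine disjoint_left.2 fun p hp hp' => ?_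
  simp only [strictCrossings, mem_filter, mem_univ, true_and, mem_image] at hp hp'
  grind

lemma card_weakExceedances (hσ : σ ∈ derangements α) :
    #σ.weakExceedances = #(univ.filter fun i => i < σ i ∧ σ i < σ (σ i)) +
      #(univ.filter fun i => i < σ i ∧ σ (σ i) < σ i) := by
  rw [← card_union_of_disjoint (disjoint_filter.2 fun i _ h h' => lt_asymm h.2 h'.2), ← filter_or]
  refine congrArg card (filter_congr fun i _ => ?_)
  have := hσ i
  have := hσ (σ i)
  grind

lemma card_peaks : #σ.peaks = #(univ.filter fun i => i < σ i ∧ σ (σ i) < σ i) :=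
  (card_equiv σ fun i => by simp [peaks]).symm

lemma card_crossings_add_card_peaks (hσ : σ ∈ derangements α) :
    #σ.crossings + #σ.peaks = #σ.strictCrossings + #σ.weakExceedances := by
  rw [card_crossings, card_weakExceedances hσ, card_peaks]
  ring

lemma card_crossings_add_card_weakExceedances_inv (hσ : σ ∈ derangements α) :
    #σ.crossings + #σ⁻¹.weakExceedances = #σ⁻¹.crossings + #σ.weakExceedances := by
  have h := card_crossings_add_card_peaks hσ
  have h' := card_crossings_add_card_peaks (inv_mem_derangements hσ)
  rw [peaks_inv, card_strictCrossings_inv] at h'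
  omega

end Equiv.Perm

lemma Icc_one_eq_image_fin (n : ℕ) : Icc 1 n = univ.image fun i : Fin n => (i : ℕ) + 1 := by
  ext j
  simp only [mem_Icc, mem_image, mem_univ, true_and]
  exact ⟨fun h => ⟨⟨j - 1, by omega⟩, by simp; omega⟩, by rintro ⟨i, rfl⟩; omega⟩

lemma val_add_one_injective (n : ℕ) : Function.Injective fun i : Fin n => (i : ℕ) + 1 :=
  (add_left_injective 1).comp Fin.val_injective

section

variable {n : ℕ}

lemma permVal_val_add_one (σ : Equiv.Perm (Fin n)) (i : Fin n) :
    permVal σ (i + 1) = σ i + 1 := by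
  rw [permVal, dif_pos ⟨by omega, i.isLt⟩]
  simp

lemma wex_eq_card_weakExceedances (σ : Equiv.Perm (Fin n)) :
    wex σ = #σ.weakExceedances := by
  rw [wex, Icc_one_eq_image_fin, filter_image, card_image_of_injective _ (val_add_one_injective n)]
  simp only [permVal_val_add_one, add_le_add_iff_right, Fin.val_fin_le]
  rfl

lemma cr_eq_card_crossings (σ : Equiv.Perm (Fin n)) : cr σ = #σ.crossings := by
  rw [cr, Icc_one_eq_image_fin, ← prodMap_image_product, filter_image,
    card_image_of_injective _ ((val_add_one_injective n).prodMap (val_add_one_injective n))]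
  simp only [Prod.map_fst, Prod.map_snd, permVal_val_add_one, add_le_add_iff_right,
    add_lt_add_iff_right, Fin.val_fin_le, Fin.val_fin_lt, univ_product_univ]
  rfl

lemma wex_add_wex_inv {σ : Equiv.Perm (Fin n)} (hσ : σ ∈ derangements (Fin n)) :
    wex σ + wex σ⁻¹ = n := by
  simpa [wex_eq_card_weakExceedances] using
    Equiv.Perm.card_weakExceedances_add_card_weakExceedances_inv hσ

lemma cr_add_wex_inv {σ : Equiv.Perm (Fin n)} (hσ : σ ∈ derangements (Fin n)) :
    cr σ + wex σ⁻¹ = cr σ⁻¹ + wex σ := by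
  simpa [wex_eq_card_weakExceedances, cr_eq_card_crossings] using
    Equiv.Perm.card_crossings_add_card_weakExceedances_inv hσ

end

lemma neg_one_pow_add_neg_one_pow {R : Type*} [Ring R] {a b : ℕ} (h : Odd (a + b)) :
    (-1 : R) ^ a + (-1) ^ b = 0 := by
  rcases Nat.even_or_odd a with ha | ha
  · rw [ha.neg_one_pow, ((Nat.odd_add'.1 h).2 ha).neg_one_pow, add_neg_cancel]
  · rw [ha.neg_one_pow, ((Nat.odd_add.1 h).1 ha).neg_one_pow, neg_add_cancel]

theorem stmt7 (n : ℕ) (hn : Odd n) :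
    ∑ σ ∈ Finset.univ.filter (fun σ : Equiv.Perm (Fin n) => ∀ i, σ i ≠ i),
      (-1 : Polynomial ℤ) ^ wex σ * X ^ (cr σ + (n - wex σ)) = 0 := by
  refine sum_involution (fun σ _ => σ⁻¹) (fun σ hσ => ?_) (fun σ hσ _ => ?_)
    (fun σ hσ => ?_) (fun σ _ => inv_inv σ)
  all_goals have hd : σ ∈ derangements (Fin n) := (mem_filter.1 hσ).2
  · have hw := wex_add_wex_inv hd
    have hw' := wex_add_wex_inv (Equiv.Perm.inv_mem_derangements hd)
    rw [inv_inv] at hw'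
    rw [show n - wex σ = wex σ⁻¹ by omega, show n - wex σ⁻¹ = wex σ by omega,
      ← cr_add_wex_inv hd, ← add_mul, neg_one_pow_add_neg_one_pow (hw.symm ▸ hn), zero_mul]
  · intro hinv
    have hw := wex_add_wex_inv hd
    rw [hinv] at hw
    exact Nat.not_even_iff_odd.2 hn ⟨_, hw.symm⟩
  · exact mem_filter.2 ⟨mem_univ _, Equiv.Perm.inv_mem_derangements hd⟩
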